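/- arXiv:1402.0317 — 2 statements merged into one kernel-verified Lean document; each statement's English description precedes it below -/
import Mathlib

section
/- The torsion T* of the Chern connection is given by: T*(hX,hY) = ℜ(X,Y), T*(hX,JY) = C'(X,Y), and T*(JX,JY) = 0. -/
/-- Abstract Klein–Grifone setting: the Lie algebra of vector fields on the tangent
bundle `TM` of a manifold `M`, regarded as a module over the smooth functions on `TM`,
together with the natural almost-tangent structure `J`, the Liouville (canonical)
vector field `C`, and the directional-derivative action of vector fields on functions. -/
structure KGSetting where
  /-- vector fields on TM -/
  VF : Type
  /-- smooth functions on TM -/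
  Fn : Type
  [vfLie : LieRing VF]
  [vfAlg : LieAlgebra ℝ VF]
  [fnRing : CommRing Fn]
  [fnAlg : Algebra ℝ Fn]
  [fnModVF : Module Fn VF]
  /-- the directional derivative `X.f` of a function along a vector field -/
  der : VF →ₗ[ℝ] Fn →ₗ[ℝ] Fn
  der_mul : ∀ (X : VF) (f g : Fn), der X (f * g) = der X f * g + f * der X g
  /-- Leibniz rule for the Lie bracket and the `Fn`-module structure -/
  bracket_smul : ∀ (X : VF) (f : Fn) (Y : VF), ⁅X, f • Y⁆ = der X f • Y + f • ⁅X, Y⁆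
  /-- the natural almost-tangent structure -/
  J : VF →ₗ[ℝ] VF
  /-- the Liouville (canonical) vector field -/
  Liouville : VF
  /-- J² = 0 -/
  J_sq : ∀ (X : VF), J (J X) = 0
  /-- the Frölicher–Nijenhuis bracket [J,J] vanishes -/
  JJ : ∀ (X Y : VF), ⁅J X, J Y⁆ = J ⁅J X, Y⁆ + J ⁅X, J Y⁆
  /-- the Frölicher–Nijenhuis bracket [C,J] equals -J -/
  CJ : ∀ (X : VF), ⁅Liouville, J X⁆ = J ⁅Liouville, X⁆ - J X
  /-- the Liouville vector field is vertical -/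
  J_Liouville : J Liouville = 0

attribute [instance] KGSetting.vfLie KGSetting.vfAlg KGSetting.fnRing
  KGSetting.fnAlg KGSetting.fnModVF

/-- A linear connection on `TM` in the Klein–Grifone setting. -/
structure LinConn (K : KGSetting) where
  /-- the covariant derivative `D X Y = ∇_X Y` -/
  D : K.VF → K.VF → K.VF
  addX : ∀ X X' Y, D (X + X') Y = D X Y + D X' Y
  smulX : ∀ (f : K.Fn) X Y, D (f • X) Y = f • D X Y
  addY : ∀ X Y Y', D X (Y + Y') = D X Y + D X Y'
  smulY : ∀ X (f : K.Fn) Y, D X (f • Y) = K.der X f • Y + f • D X Y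

namespace LinConn

variable {K : KGSetting} (N : LinConn K)

/-- the classical torsion `T(X,Y) = ∇_X Y − ∇_Y X − [X,Y]` -/
def tor (X Y : K.VF) : K.VF := N.D X Y - N.D Y X - ⁅X, Y⁆

/-- the classical curvature `K(X,Y)Z = ∇_X ∇_Y Z − ∇_Y ∇_X Z − ∇_{[X,Y]} Z` -/
def curv (X Y Z : K.VF) : K.VF := N.D X (N.D Y Z) - N.D Y (N.D X Z) - N.D ⁅X, Y⁆ Z

end LinConn

/-- A Finsler space `(M,E)` in the Klein–Grifone approach: the canonical spray `S`,
the Barthel connection `Γ = [J,S]` with horizontal/vertical projectors `h`, `v`,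
the associated almost-complex structure `F`, the metric `g(X,Y) = Ω(X,FY)`,
and the Cartan tensors `𝒞` (`Ct`) and `𝒞'` (`Ct'`). -/
structure FinslerKG extends KGSetting where
  /-- the canonical spray -/
  S : VF
  JS : J S = Liouville
  /-- the spray is homogeneous of degree 2: [C,S] = S -/
  S_hom : ⁅Liouville, S⁆ = S
  /-- the Barthel connection -/
  Gam : VF →ₗ[ℝ] VF
  /-- Γ = [J,S] (Frölicher–Nijenhuis bracket) -/
  Gam_def : ∀ (X : VF), Gam X = ⁅J X, S⁆ - J ⁅X, S⁆
  JGam : ∀ (X : VF), J (Gam X) = J X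
  GamJ : ∀ (X : VF), Gam (J X) = - J X
  Gam_sq : ∀ (X : VF), Gam (Gam X) = X
  /-- the Barthel connection is homogeneous: [C,Γ] = 0 -/
  Gam_hom : ∀ (X : VF), ⁅Liouville, Gam X⁆ = Gam ⁅Liouville, X⁆
  /-- horizontal projector h = (I+Γ)/2 -/
  h : VF →ₗ[ℝ] VF
  h_def : ∀ (X : VF), (2:ℝ) • h X = X + Gam X
  /-- vertical projector v = (I−Γ)/2 -/
  v : VF →ₗ[ℝ] VF
  v_def : ∀ (X : VF), (2:ℝ) • v X = X - Gam X
  /-- the Barthel connection has vanishing torsion `t` -/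
  torsion_free : ∀ (X Y : VF), v ⁅J X, h Y⁆ + v ⁅h X, J Y⁆ = J ⁅h X, h Y⁆
  /-- the almost-complex structure of the Barthel connection -/
  F : VF →ₗ[ℝ] VF
  FJ : ∀ (X : VF), F (J X) = h X
  Fh : ∀ (X : VF), F (h X) = - J X
  /-- the metric `g(X,Y) = Ω(X,FY)` on TM -/
  g : VF →ₗ[ℝ] VF →ₗ[ℝ] Fn
  g_symm : ∀ (X Y : VF), g X Y = g Y X
  g_hJ : ∀ (X Y : VF), g (h X) (J Y) = 0
  g_hh : ∀ (X Y : VF), g (h X) (h Y) = g (J X) (J Y)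
  /-- the Cartan tensor 𝒞, `Ω(𝒞(X,Y),Z) = ½(L_{JX}(J*g))(Y,Z)` -/
  Ct : VF →ₗ[ℝ] VF →ₗ[ℝ] VF
  Ct_symm : ∀ (X Y : VF), Ct X Y = Ct Y X
  Ct_sb1 : ∀ (X Y : VF), J (Ct X Y) = 0
  Ct_sb2 : ∀ (X Y : VF), Ct (J X) Y = 0
  Ct_S : ∀ (X : VF), Ct X S = 0
  Ct_def : ∀ (X Y Z : VF), (2:ℝ) • g (Ct X Y) (J Z) =
    der (J X) (g (J Y) (J Z)) - g (J ⁅J X, Y⁆) (J Z) - g (J Y) (J ⁅J X, Z⁆)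
  /-- the Cartan tensor 𝒞', `Ω(𝒞'(X,Y),Z) = ½(L_{hX}g)(JY,JZ)` -/
  Ct' : VF →ₗ[ℝ] VF →ₗ[ℝ] VF
  Ct'_symm : ∀ (X Y : VF), Ct' X Y = Ct' Y X
  Ct'_sb1 : ∀ (X Y : VF), J (Ct' X Y) = 0
  Ct'_sb2 : ∀ (X Y : VF), Ct' (J X) Y = 0
  Ct'_S : ∀ (X : VF), Ct' X S = 0
  Ct'_def : ∀ (X Y Z : VF), (2:ℝ) • g (Ct' X Y) (J Z) =
    der (h X) (g (J Y) (J Z)) - g ⁅h X, J Y⁆ (J Z) - g (J Y) ⁅h X, J Z⁆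

namespace FinslerKG

variable (K : FinslerKG)

/-- the curvature `ℜ(X,Y) = −v[hX,hY]` of the Barthel connection -/
def Rbar (X Y : K.VF) : K.VF := - K.v ⁅K.h X, K.h Y⁆

/-- `∇` is a normal lift of the Barthel connection: `∇J = 0`,
`∇_{JX}JY = J[JX,Y]`, `∇Γ = 0`, and the nonlinear connection induced by `∇`
is the Barthel connection (equivalently `∇C = v`). -/
def IsNormalLift (N : LinConn K.toKGSetting) : Prop :=
  (∀ (X Y : K.VF), N.D X (K.J Y) = K.J (N.D X Y)) ∧
  (∀ (X Y : K.VF), N.D (K.J X) (K.J Y) = K.J ⁅K.J X, Y⁆) ∧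
  (∀ (X Y : K.VF), N.D X (K.Gam Y) = K.Gam (N.D X Y)) ∧
  (∀ (X : K.VF), N.D X K.Liouville = K.v X)

/-- `∇` is horizontally metric: `∇_{hX} g = 0`. -/
def HMetric (N : LinConn K.toKGSetting) : Prop :=
  ∀ (X Y Z : K.VF), K.der (K.h X) (K.g Y Z) =
    K.g (N.D (K.h X) Y) Z + K.g Y (N.D (K.h X) Z)

/-- the classical torsion of `∇` satisfies `J T(hX,hY) = 0`. -/
def JTorFree (N : LinConn K.toKGSetting) : Prop :=
  ∀ (X Y : K.VF), K.J (N.tor (K.h X) (K.h Y)) = 0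

/-- `∇` is the Chern connection of `(M,E)`. -/
def IsChern (N : LinConn K.toKGSetting) : Prop :=
  K.IsNormalLift N ∧ K.HMetric N ∧ K.JTorFree N

/-- the three formulas that completely determine the Chern connection. -/
def ChernEq (N : LinConn K.toKGSetting) : Prop :=
  (∀ (X Y : K.VF), N.D (K.J X) (K.J Y) = K.J ⁅K.J X, Y⁆) ∧
  (∀ (X Y : K.VF), N.D (K.h X) (K.J Y) = K.v ⁅K.h X, K.J Y⁆ + K.Ct' X Y) ∧
  (∀ (X Y : K.VF), N.D X (K.F Y) = K.F (N.D X Y))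

/-- the formulas that completely determine the Cartan connection. -/
def CartanEq (N : LinConn K.toKGSetting) : Prop :=
  (∀ (X Y : K.VF), N.D (K.J X) (K.J Y) = K.J ⁅K.J X, Y⁆ + K.Ct X Y) ∧
  (∀ (X Y : K.VF), N.D (K.h X) (K.J Y) = K.v ⁅K.h X, K.J Y⁆ + K.Ct' X Y) ∧
  (∀ (X Y : K.VF), N.D X (K.F Y) = K.F (N.D X Y))

/-- the formulas that completely determine the Berwald connection. -/
def BerwaldEq (N : LinConn K.toKGSetting) : Prop :=
  (∀ (X Y : K.VF), N.D (K.J X) (K.J Y) = K.J ⁅K.J X, Y⁆) ∧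
  (∀ (X Y : K.VF), N.D (K.h X) (K.J Y) = K.v ⁅K.h X, K.J Y⁆) ∧
  (∀ (X Y : K.VF), N.D X (K.F Y) = K.F (N.D X Y))

/-- the h-curvature `R*(X,Y)Z = K*(hX,hY)JZ` of a connection -/
def Rstar (N : LinConn K.toKGSetting) (X Y Z : K.VF) : K.VF :=
  N.curv (K.h X) (K.h Y) (K.J Z)

/-- the hv-curvature `P*(X,Y)Z = K*(hX,JY)JZ` of a connection -/
def Pstar (N : LinConn K.toKGSetting) (X Y Z : K.VF) : K.VF :=
  N.curv (K.h X) (K.J Y) (K.J Z)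

/-- the covariant derivative `(∇_W 𝒞')(X,Z)` of the Cartan tensor `𝒞'` -/
def DCt' (N : LinConn K.toKGSetting) (W X Z : K.VF) : K.VF :=
  N.D W (K.Ct' X Z) - K.Ct' (N.D W X) Z - K.Ct' X (N.D W Z)

/-- the covariant derivative `(∇_W R)(X,Y)Z` of a vector 3-form (curvature-type tensor) -/
def Dtensor3 (N : LinConn K.toKGSetting) (R : K.VF → K.VF → K.VF → K.VF)
    (W X Y Z : K.VF) : K.VF :=
  N.D W (R X Y Z) - R (N.D W X) Y Z - R X (N.D W Y) Z - R X Y (N.D W Z)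

end FinslerKG

/-! Since `hY = F(JY)` and `∇*` commutes with `F`, the defining formulas of `∇*` on vertical
arguments give `∇*_{JX} hY = h[JX,Y]` and `∇*_{hX} hY = F(v[hX,JY] + 𝒞'(X,Y))`. The three torsion
components then follow from `[J,J] = 0`, the vanishing torsion of the Barthel connection
(which makes the `𝒞'` terms cancel by symmetry), and the fact that `h` kills the bracket of a
vertical field with a vertical one. -/

namespace FinslerKG

variable (K : FinslerKG)

theorem h_add_v (X : K.VF) : K.h X + K.v X = X := by
  apply smul_right_injective K.VF (two_ne_zero' ℝ)
  simp only [smul_add, K.h_def, K.v_def, two_smul]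
  abel

theorem h_J (X : K.VF) : K.h (K.J X) = 0 := by
  apply smul_right_injective K.VF (two_ne_zero' ℝ)
  simp only [K.h_def, K.GamJ, smul_zero, add_neg_cancel]

theorem J_v (X : K.VF) : K.J (K.v X) = 0 := by
  apply smul_right_injective K.VF (two_ne_zero' ℝ)
  simp only [← map_smul, K.v_def, map_sub, K.JGam, sub_self, smul_zero]

/-- Vertical fields are `J`-images: `Γ Z = -J[Z,S]` when `JZ = 0`, and `Γ² = 1`. -/
theorem eq_J_lie_S_of_J_eq_zero {Z : K.VF} (hZ : K.J Z = 0) : Z = K.J ⁅Z, K.S⁆ := by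
  have hGam : K.Gam Z = - K.J ⁅Z, K.S⁆ := by rw [K.Gam_def, hZ, zero_lie, zero_sub]
  simpa only [hGam, map_neg, K.GamJ, neg_neg] using (K.Gam_sq Z).symm

theorem h_lie_J_J (X Y : K.VF) : K.h ⁅K.J X, K.J Y⁆ = 0 := by
  rw [K.JJ, map_add, h_J, h_J, add_zero]

theorem h_lie_J_v (X Y : K.VF) : K.h ⁅K.J X, K.v Y⁆ = 0 := by
  rw [K.eq_J_lie_S_of_J_eq_zero (K.J_v Y), h_lie_J_J]

theorem h_lie_J_eq_neg_h_lie_h (X Y : K.VF) : K.h ⁅K.J X, Y⁆ = - K.h ⁅K.h Y, K.J X⁆ := by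
  conv_lhs => rw [← K.h_add_v Y]
  rw [lie_add, map_add, h_lie_J_v, add_zero, ← lie_skew, map_neg]

/-- The vanishing torsion of the Barthel connection, pushed through `F` using `F ∘ J = h`. -/
theorem F_v_lie_sub_F_v_lie (X Y : K.VF) :
    K.F (K.v ⁅K.h X, K.J Y⁆) - K.F (K.v ⁅K.h Y, K.J X⁆) = K.h ⁅K.h X, K.h Y⁆ := by
  rw [← K.FJ ⁅K.h X, K.h Y⁆, ← K.torsion_free, ← lie_skew (K.h Y), map_neg, map_add, map_neg]
  abel

variable {K} {N : LinConn K.toKGSetting}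

theorem tor_J_J_eq_zero (hJJ : ∀ X Y, N.D (K.J X) (K.J Y) = K.J ⁅K.J X, Y⁆) (X Y : K.VF) :
    N.tor (K.J X) (K.J Y) = 0 := by
  rw [LinConn.tor, hJJ, hJJ, K.JJ, ← lie_skew X, map_neg]
  abel

theorem D_J_h (hJJ : ∀ X Y, N.D (K.J X) (K.J Y) = K.J ⁅K.J X, Y⁆)
    (hF : ∀ X Y, N.D X (K.F Y) = K.F (N.D X Y)) (X Y : K.VF) :
    N.D (K.J X) (K.h Y) = K.h ⁅K.J X, Y⁆ := by
  rw [← K.FJ Y, hF, hJJ, K.FJ]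

theorem D_h_h (hhJ : ∀ X Y, N.D (K.h X) (K.J Y) = K.v ⁅K.h X, K.J Y⁆ + K.Ct' X Y)
    (hF : ∀ X Y, N.D X (K.F Y) = K.F (N.D X Y)) (X Y : K.VF) :
    N.D (K.h X) (K.h Y) = K.F (K.v ⁅K.h X, K.J Y⁆) + K.F (K.Ct' X Y) := by
  rw [← K.FJ Y, hF, hhJ, map_add]

theorem tor_h_h_eq_Rbar
    (hhJ : ∀ X Y, N.D (K.h X) (K.J Y) = K.v ⁅K.h X, K.J Y⁆ + K.Ct' X Y)
    (hF : ∀ X Y, N.D X (K.F Y) = K.F (N.D X Y)) (X Y : K.VF) :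
    N.tor (K.h X) (K.h Y) = K.Rbar X Y := by
  have hDiff : N.D (K.h X) (K.h Y) - N.D (K.h Y) (K.h X) = K.h ⁅K.h X, K.h Y⁆ := by
    rw [D_h_h hhJ hF, D_h_h hhJ hF, K.Ct'_symm Y X, ← K.F_v_lie_sub_F_v_lie]
    abel
  rw [LinConn.tor, hDiff, Rbar, eq_sub_of_add_eq (K.h_add_v _)]
  abel

theorem tor_h_J_eq_Ct' (hJJ : ∀ X Y, N.D (K.J X) (K.J Y) = K.J ⁅K.J X, Y⁆)
    (hhJ : ∀ X Y, N.D (K.h X) (K.J Y) = K.v ⁅K.h X, K.J Y⁆ + K.Ct' X Y)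
    (hF : ∀ X Y, N.D X (K.F Y) = K.F (N.D X Y)) (X Y : K.VF) :
    N.tor (K.h X) (K.J Y) = K.Ct' X Y := by
  rw [LinConn.tor, hhJ, D_J_h hJJ hF, h_lie_J_eq_neg_h_lie_h, eq_sub_of_add_eq (K.h_add_v ⁅K.h X, K.J Y⁆)]
  abel

end FinslerKG

/-- The torsion of the Chern connection is given by
`T*(hX,hY) = ℜ(X,Y)`, `T*(hX,JY) = 𝒞'(X,Y)` and `T*(JX,JY) = 0`. -/
theorem chern_torsion (K : FinslerKG) (N : LinConn K.toKGSetting)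
    (hN : K.ChernEq N) :
    ∀ X Y : K.VF,
      N.tor (K.h X) (K.h Y) = K.Rbar X Y ∧
      N.tor (K.h X) (K.J Y) = K.Ct' X Y ∧
      N.tor (K.J X) (K.J Y) = 0 := by
  obtain ⟨hJJ, hhJ, hF⟩ := hN
  exact fun X Y => ⟨K.tor_h_h_eq_Rbar hhJ hF X Y, K.tor_h_J_eq_Ct' hJJ hhJ hF X Y,
    K.tor_J_J_eq_zero hJJ X Y⟩
end

section
/- For any linear connection ∇ with torsion T and curvature K on a manifold, the first and second Bianchi identities hold: 𝔖_{X,Y,Z}{K(X,Y)Z} = 𝔖_{X,Y,Z}{T(T(X,Y),Z) + (∇_X T)(Y,Z)} and 𝔖_{X,Y,Z}{K(T(X,Y),Z) + (∇_X K)(Y,Z)} = 0. -/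
/-! Expanding `T`, `K` and the covariant derivatives by additivity of `∇` in each argument,
all terms with iterated covariant derivatives cancel in the cyclic sums, as do the brackets
`⁅∇_Y X, Z⁆` once antisymmetry of the bracket is used. What is left is the Jacobi identity,
for the first identity directly and for the second inside `∇_{·} W`. -/

theorem lie_lie_add_lie_lie_add_lie_lie {L : Type*} [LieRing L] (x y z : L) :
    ⁅⁅x, y⁆, z⁆ + ⁅⁅y, z⁆, x⁆ + ⁅⁅z, x⁆, y⁆ = 0 := by
  rw [← lie_skew ⁅x, y⁆, ← lie_skew ⁅y, z⁆, ← lie_skew ⁅z, x⁆, ← neg_eq_zero, ← lie_jacobi x y z]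
  abel

namespace LinConn

variable {K : KGSetting} (N : LinConn K)

theorem D_sub_left (X X' Y : K.VF) : N.D (X - X') Y = N.D X Y - N.D X' Y := by
  rw [eq_sub_iff_add_eq, ← N.addX, sub_add_cancel]

theorem D_zero_left (Y : K.VF) : N.D 0 Y = 0 := by
  simpa using N.D_sub_left 0 0 Y

theorem D_neg_left (X Y : K.VF) : N.D (-X) Y = -N.D X Y := by
  simpa [D_zero_left] using N.D_sub_left 0 X Y

theorem D_sub_right (X Y Y' : K.VF) : N.D X (Y - Y') = N.D X Y - N.D X Y' := by
  rw [eq_sub_iff_add_eq, ← N.addY, sub_add_cancel]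

/-- `(∇_X T)(Y, Z)` -/
def covDerivTor (X Y Z : K.VF) : K.VF :=
  N.D X (N.tor Y Z) - N.tor (N.D X Y) Z - N.tor Y (N.D X Z)

/-- `(∇_X K)(Y, Z) W` -/
def covDerivCurv (X Y Z W : K.VF) : K.VF :=
  N.D X (N.curv Y Z W) - N.curv (N.D X Y) Z W - N.curv Y (N.D X Z) W - N.curv Y Z (N.D X W)

theorem first_bianchi (X Y Z : K.VF) :
    N.curv X Y Z + N.curv Y Z X + N.curv Z X Y =
      (N.tor (N.tor X Y) Z + N.covDerivTor X Y Z) + (N.tor (N.tor Y Z) X + N.covDerivTor Y Z X) +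
        (N.tor (N.tor Z X) Y + N.covDerivTor Z X Y) := by
  simp only [curv, tor, covDerivTor, D_sub_left, D_sub_right, sub_lie]
  rw [← lie_skew (N.D Y X), ← lie_skew (N.D Z Y), ← lie_skew (N.D X Z), ← sub_eq_zero,
    ← neg_eq_zero, ← lie_lie_add_lie_lie_add_lie_lie X Y Z]
  abel

theorem second_bianchi (X Y Z W : K.VF) :
    (N.curv (N.tor X Y) Z W + N.covDerivCurv X Y Z W) +
      (N.curv (N.tor Y Z) X W + N.covDerivCurv Y Z X W) +
      (N.curv (N.tor Z X) Y W + N.covDerivCurv Z X Y W) = 0 := by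
  have jacobi : N.D ⁅⁅X, Y⁆, Z⁆ W + N.D ⁅⁅Y, Z⁆, X⁆ W + N.D ⁅⁅Z, X⁆, Y⁆ W = 0 := by
    rw [← N.addX, ← N.addX, lie_lie_add_lie_lie_add_lie_lie, D_zero_left]
  simp only [curv, tor, covDerivCurv, D_sub_left, D_sub_right, sub_lie]
  rw [← lie_skew (N.D Y X), ← lie_skew (N.D Z Y), ← lie_skew (N.D X Z)]
  simp only [D_neg_left]
  convert jacobi using 1
  abel

end LinConn

/-- For any linear connection `∇` with torsion `T` and
curvature `K` on a manifold, the first and second Bianchi identities hold: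
`𝔖{K(X,Y)Z} = 𝔖{T(T(X,Y),Z) + (∇_X T)(Y,Z)}` and
`𝔖{K(T(X,Y),Z) + (∇_X K)(Y,Z)} = 0`. -/
theorem bianchi_identities (K : KGSetting) (N : LinConn K) :
    (∀ X Y Z : K.VF,
      N.curv X Y Z + N.curv Y Z X + N.curv Z X Y =
        (N.tor (N.tor X Y) Z +
          (N.D X (N.tor Y Z) - N.tor (N.D X Y) Z - N.tor Y (N.D X Z))) +
        (N.tor (N.tor Y Z) X +
          (N.D Y (N.tor Z X) - N.tor (N.D Y Z) X - N.tor Z (N.D Y X))) +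
        (N.tor (N.tor Z X) Y +
          (N.D Z (N.tor X Y) - N.tor (N.D Z X) Y - N.tor X (N.D Z Y)))) ∧
    (∀ X Y Z W : K.VF,
      (N.curv (N.tor X Y) Z W +
        (N.D X (N.curv Y Z W) - N.curv (N.D X Y) Z W - N.curv Y (N.D X Z) W -
          N.curv Y Z (N.D X W))) +
      (N.curv (N.tor Y Z) X W +
        (N.D Y (N.curv Z X W) - N.curv (N.D Y Z) X W - N.curv Z (N.D Y X) W -
          N.curv Z X (N.D Y W))) +
      (N.curv (N.tor Z X) Y W +
        (N.D Z (N.curv X Y W) - N.curv (N.D Z X) Y W - N.curv X (N.D Z Y) W -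
          N.curv X Y (N.D Z W))) = 0) :=
  ⟨N.first_bianchi, N.second_bianchi⟩
end
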